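/- For real η ≠ 0, t ∈ [0,1], and integers s₀ ≥ 1, 1 ≤ s ≤ s₀, the integral over the region {1 ≥ β₁ ≥ ⋯ ≥ β_{s₀} ≥ 0, β_s ≥ t ≥ β_{s+1}} of exp(2η ∑_{k=1}^{s₀} β_k) dβ equals (1/(s!(s₀−s)!)) · ((e^{2η} − e^{2ηt})/(2η))^s · ((e^{2ηt} − 1)/(2η))^{s₀−s}. -/

import Mathlib

open MeasureTheory


-- the ordered set
def OSet (n : ℕ) (a b : ℝ) : Set (Fin n → ℝ) :=
  {β | (∀ i j : Fin n, i ≤ j → β j ≤ β i) ∧ (∀ i, β i ∈ Set.Icc a b)}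

lemma isClosed_OSet (n : ℕ) (a b : ℝ) : IsClosed (OSet n a b) := by
  have h1 : OSet n a b = (⋂ (i : Fin n), ⋂ (j : Fin n), ⋂ (_ : i ≤ j),
      {β : Fin n → ℝ | β j ≤ β i}) ∩ (⋂ (i : Fin n), (fun β : Fin n → ℝ => β i) ⁻¹' Set.Icc a b) := by
    ext β; simp [OSet, Set.mem_iInter]
  rw [h1]
  apply IsClosed.inter
  · exact isClosed_iInter fun i => isClosed_iInter fun j => isClosed_iInter fun _ =>
      isClosed_le (continuous_apply j) (continuous_apply i)
  · exact isClosed_iInter fun i => (isClosed_Icc).preimage (continuous_apply i)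

lemma isCompact_OSet (n : ℕ) (a b : ℝ) : IsCompact (OSet n a b) := by
  refine IsCompact.of_isClosed_subset (isCompact_Icc (a := fun _ : Fin n => a) (b := fun _ => b))
    (isClosed_OSet n a b) ?_
  intro β hβ
  exact ⟨fun i => (hβ.2 i).1, fun i => (hβ.2 i).2⟩

lemma integrableOn_OSet (n : ℕ) (a b c : ℝ) :
    IntegrableOn (fun β => Real.exp (c * ∑ k, β k)) (OSet n a b) := by
  refine ContinuousOn.integrableOn_compact (isCompact_OSet n a b) ?_
  exact (Real.continuous_exp.comp (continuous_const.mul (continuous_finset_sum _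
    fun i _ => continuous_apply i))).continuousOn

lemma cons_mem_OSet (n : ℕ) (a b x : ℝ) (β : Fin n → ℝ) :
    Fin.cons x β ∈ OSet (n + 1) a b ↔ x ∈ Set.Icc a b ∧ β ∈ OSet n a x := by
  constructor
  · rintro ⟨ho, hb⟩
    refine ⟨hb 0, fun i j hij => ho i.succ j.succ (by simpa using hij), fun i => ⟨(hb i.succ).1, ?_⟩⟩
    simpa using ho 0 i.succ (Fin.zero_le _)
  · rintro ⟨hx, ho, hb⟩
    refine ⟨?_, ?_⟩
    · intro i j hij
      induction i using Fin.cases with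
      | zero =>
        induction j using Fin.cases with
        | zero => simp
        | succ j => simpa using (hb j).2
      | succ i =>
        induction j using Fin.cases with
        | zero => exact absurd hij (by simp [Fin.le_def, Nat.succ_le_iff, Fin.lt_iff_val_lt_val])
        | succ j => simpa using ho i j (by simpa using hij)
    · intro i
      induction i using Fin.cases with
      | zero => simpa using hx
      | succ i => exact ⟨(hb i).1, le_trans (hb i).2 hx.2⟩

lemma oset_integral (c : ℝ) (hc : c ≠ 0) : ∀ (n : ℕ) (a b : ℝ), a ≤ b →
    ∫ β in OSet n a b, Real.exp (c * ∑ k, β k)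
      = ((Real.exp (c * b) - Real.exp (c * a)) / c) ^ n / (Nat.factorial n) := by
  intro n
  induction n with
  | zero =>
    intro a b _
    have : OSet 0 a b = Set.univ := by
      ext β; simp [OSet]
    simp [this, volume_pi, Measure.pi_univ, measureReal_def]
  | succ n ih =>
    intro a b hab
    -- transfer along piFinSuccAbove at 0
    have hmp := (volume_preserving_piFinSuccAbove (fun _ : Fin (n+1) => ℝ) 0).symm
    set e := MeasurableEquiv.piFinSuccAbove (fun _ : Fin (n+1) => ℝ) 0 with he
    have hkey : ∀ p : ℝ × (Fin n → ℝ), e.symm p = Fin.cons p.1 p.2 := by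
      intro p
      simp [he, MeasurableEquiv.piFinSuccAbove_symm_apply, Fin.insertNthEquiv,
        Fin.insertNth_zero']
    have h1 : ∫ β in OSet (n+1) a b, Real.exp (c * ∑ k, β k)
        = ∫ p in e.symm ⁻¹' OSet (n+1) a b,
            Real.exp (c * (p.1 + ∑ k, p.2 k)) ∂(volume.prod volume) := by
      rw [← hmp.setIntegral_preimage_emb e.symm.measurableEmbedding]
      apply setIntegral_congr_fun
        ((isClosed_OSet _ _ _).measurableSet.preimage e.symm.measurable)
      intro p _
      dsimp only
      rw [hkey p, Fin.sum_cons]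
    have hset : e.symm ⁻¹' OSet (n+1) a b
        = {p : ℝ × (Fin n → ℝ) | p.1 ∈ Set.Icc a b ∧ p.2 ∈ OSet n a p.1} := by
      ext p
      simp only [Set.mem_preimage, Set.mem_setOf_eq, hkey p, cons_mem_OSet]
    rw [h1, hset]
    have step1 : ∫ p in {p : ℝ × (Fin n → ℝ) | p.1 ∈ Set.Icc a b ∧ p.2 ∈ OSet n a p.1},
        Real.exp (c * (p.1 + ∑ k, p.2 k)) ∂(volume.prod volume)
      = ∫ x in Set.Icc a b,
          Real.exp (c * x) * (((Real.exp (c * x) - Real.exp (c * a)) / c) ^ n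
            / (Nat.factorial n)) := by
      set P : Set (ℝ × (Fin n → ℝ)) := {p | p.1 ∈ Set.Icc a b ∧ p.2 ∈ OSet n a p.1} with hP
      set F : ℝ × (Fin n → ℝ) → ℝ := fun p => Real.exp (c * (p.1 + ∑ k, p.2 k)) with hF
      have hPclosed : IsClosed P := by
        have : P = {p : ℝ × (Fin n → ℝ) | p.1 ∈ Set.Icc a b}
            ∩ ({p | ∀ i j : Fin n, i ≤ j → p.2 j ≤ p.2 i}
            ∩ {p | ∀ i, a ≤ p.2 i ∧ p.2 i ≤ p.1}) := by
          ext p; simp [hP, OSet, Set.mem_Icc, and_assoc, forall_and]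
        rw [this]
        refine (isClosed_Icc.preimage continuous_fst).inter (IsClosed.inter ?_ ?_)
        · have : {p : ℝ × (Fin n → ℝ) | ∀ i j : Fin n, i ≤ j → p.2 j ≤ p.2 i}
              = ⋂ (i : Fin n), ⋂ (j : Fin n), ⋂ (_ : i ≤ j), {p : ℝ × (Fin n → ℝ) | p.2 j ≤ p.2 i} := by
            ext p; simp
          rw [this]
          exact isClosed_iInter fun i => isClosed_iInter fun j => isClosed_iInter fun _ =>
            isClosed_le ((continuous_apply j).comp continuous_snd)
              ((continuous_apply i).comp continuous_snd)
        · have : {p : ℝ × (Fin n → ℝ) | ∀ i, a ≤ p.2 i ∧ p.2 i ≤ p.1}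
              = ⋂ (i : Fin n), ({p : ℝ × (Fin n → ℝ) | a ≤ p.2 i} ∩ {p | p.2 i ≤ p.1}) := by
            ext p; simp [forall_and]
          rw [this]
          exact isClosed_iInter fun i =>
            (isClosed_le continuous_const ((continuous_apply i).comp continuous_snd)).inter
              (isClosed_le ((continuous_apply i).comp continuous_snd) continuous_fst)
      have hPcompact : IsCompact P := by
        refine IsCompact.of_isClosed_subset
          ((isCompact_Icc (a := a) (b := b)).prod
            (isCompact_Icc (a := fun _ : Fin n => a) (b := fun _ => b))) hPclosed ?_
        rintro ⟨x, β⟩ ⟨hx, _, hβ⟩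
        exact ⟨hx, fun i => (hβ i).1, fun i => le_trans (hβ i).2 hx.2⟩
      have hFcont : Continuous F := by
        apply Real.continuous_exp.comp
        exact continuous_const.mul (continuous_fst.add
          (continuous_finset_sum _ fun i _ => (continuous_apply i).comp continuous_snd))
      have hInt : Integrable (P.indicator F) (volume.prod volume) := by
        rw [integrable_indicator_iff hPclosed.measurableSet]
        exact hFcont.continuousOn.integrableOn_compact hPcompact
      rw [← integral_indicator hPclosed.measurableSet, integral_prod _ hInt]
      have hinner : ∀ x : ℝ, (∫ y, P.indicator F (x, y))
          = (Set.Icc a b).indicator (fun x => ∫ y in OSet n a x, Real.exp (c * (x + ∑ k, y k))) x := by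
        intro x
        by_cases hx : x ∈ Set.Icc a b
        · rw [Set.indicator_of_mem hx, ← integral_indicator (isClosed_OSet n a x).measurableSet]
          congr 1 with y
          by_cases hy : y ∈ OSet n a x
          · rw [Set.indicator_of_mem (by exact ⟨hx, hy⟩ : (x, y) ∈ P),
              Set.indicator_of_mem hy]
          · rw [Set.indicator_of_notMem (fun h => hy h.2),
              Set.indicator_of_notMem hy]
        · rw [Set.indicator_of_notMem hx]
          have : ∀ y, P.indicator F (x, y) = 0 := fun y =>
            Set.indicator_of_notMem (fun h => hx h.1) F
          simp [this]
      simp_rw [hinner]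
      rw [integral_indicator measurableSet_Icc]
      apply setIntegral_congr_fun measurableSet_Icc
      intro x hx
      simp_rw [mul_add, Real.exp_add, integral_const_mul]
      rw [ih a x hx.1]
    rw [step1]
    have hg : ∀ x : ℝ, HasDerivAt
        (fun y => ((Real.exp (c * y) - Real.exp (c * a)) / c) ^ (n+1) / (Nat.factorial (n+1)))
        (Real.exp (c * x) * (((Real.exp (c * x) - Real.exp (c * a)) / c) ^ n / (Nat.factorial n)))
        x := by
      intro x
      have h1 : HasDerivAt (fun y : ℝ => Real.exp (c * y)) (Real.exp (c * x) * (c * 1)) x :=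
        ((hasDerivAt_id x).const_mul c).exp
      have h2 := (((h1.sub_const (Real.exp (c * a))).div_const c).pow (n+1)).div_const
        (Nat.factorial (n+1) : ℝ)
      refine h2.congr_deriv ?_
      have : ((Nat.factorial (n+1) : ℝ)) = (n+1) * Nat.factorial n := by
        push_cast [Nat.factorial_succ]; ring
      rw [this, Nat.add_sub_cancel, Nat.cast_add, Nat.cast_one]
      have hf : (Nat.factorial n : ℝ) ≠ 0 := Nat.cast_ne_zero.2 (Nat.factorial_ne_zero n)
      field_simp
    rw [MeasureTheory.integral_Icc_eq_integral_Ioc, ← intervalIntegral.integral_of_le hab]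
    have hcont : Continuous (fun x : ℝ => Real.exp (c * x) *
        (((Real.exp (c * x) - Real.exp (c * a)) / c) ^ n / (Nat.factorial n))) := by
      have h1 : Continuous fun x : ℝ => Real.exp (c * x) :=
        Real.continuous_exp.comp (continuous_const.mul continuous_id)
      exact h1.mul ((((h1.sub continuous_const).div_const c).pow n).div_const _)
    rw [intervalIntegral.integral_eq_sub_of_hasDerivAt (fun x _ => hg x)
      (hcont.intervalIntegrable a b)]
    simp

/-- For `η ≠ 0`, `t ∈ [0,1]`, `1 ≤ s ≤ s₀`, the integral of `exp(2η ∑ βₖ)` over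
ordered tuples `1 ≥ β₁ ≥ ⋯ ≥ β_{s₀} ≥ 0` with `β_s ≥ t ≥ β_{s+1}` (convention
`β_{s₀+1} = 0`; i.e. exactly the first `s` coordinates exceed `t`) equals
`(1/(s!(s₀-s)!)) ((e^{2η} - e^{2ηt})/(2η))^s ((e^{2ηt} - 1)/(2η))^{s₀-s}`. -/
theorem stmt_7 (η : ℝ) (hη : η ≠ 0) (t : ℝ) (ht : t ∈ Set.Icc (0 : ℝ) 1)
    (s₀ s : ℕ) (hs : 1 ≤ s) (hss₀ : s ≤ s₀) :
    ∫ β in {β : Fin s₀ → ℝ |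
        (∀ i j : Fin s₀, i ≤ j → β j ≤ β i) ∧ (∀ i, β i ∈ Set.Icc (0 : ℝ) 1) ∧
        (∀ i : Fin s₀, (i.val < s → t ≤ β i) ∧ (s ≤ i.val → β i ≤ t))},
      Real.exp (2 * η * ∑ k, β k)
      = (1 / ((Nat.factorial s : ℝ) * (Nat.factorial (s₀ - s) : ℝ)))
          * ((Real.exp (2 * η) - Real.exp (2 * η * t)) / (2 * η)) ^ s
          * ((Real.exp (2 * η * t) - 1) / (2 * η)) ^ (s₀ - s) := by

  have hc : (2 : ℝ) * η ≠ 0 := mul_ne_zero two_ne_zero hη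
  have h : s + (s₀ - s) = s₀ := Nat.add_sub_cancel' hss₀
  set S : Set (Fin s₀ → ℝ) := {β : Fin s₀ → ℝ |
      (∀ i j : Fin s₀, i ≤ j → β j ≤ β i) ∧ (∀ i, β i ∈ Set.Icc (0 : ℝ) 1) ∧
      (∀ i : Fin s₀, (i.val < s → t ≤ β i) ∧ (s ≤ i.val → β i ≤ t))} with hSdef
  set f : Fin s ⊕ Fin (s₀ - s) ≃ Fin s₀ := finSumFinEquiv.trans (finCongr h) with hf
  set E := (MeasurableEquiv.sumPiEquivProdPi (fun _ : Fin s ⊕ Fin (s₀ - s) => ℝ)).symm.trans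
    (MeasurableEquiv.piCongrLeft (fun _ : Fin s₀ => ℝ) f) with hE
  have hmp : MeasurePreserving E volume volume := by
    have h2 := (volume_measurePreserving_piCongrLeft (fun _ : Fin s₀ => ℝ) f).comp
      (volume_measurePreserving_sumPiEquivProdPi_symm (fun _ : Fin s ⊕ Fin (s₀ - s) => ℝ))
    simpa [hE, MeasurableEquiv.coe_trans] using h2
  have hval : ∀ (γ : Fin s → ℝ) (δ : Fin (s₀ - s) → ℝ) (x), E (γ, δ) (f x) = Sum.elim γ δ x := by
    intro γ δ x
    simp [hE, MeasurableEquiv.trans_apply, MeasurableEquiv.piCongrLeft,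
      Equiv.piCongrLeft_apply_apply, MeasurableEquiv.sumPiEquivProdPi,
      Equiv.sumPiEquivProdPi_symm_apply]
    cases x <;> rfl
  have hfl : ∀ k : Fin s, (f (Sum.inl k)).val = k.val := by intro k; simp [hf]
  have hfr : ∀ k : Fin (s₀ - s), (f (Sum.inr k)).val = s + k.val := by intro k; simp [hf]
  have hSet : E ⁻¹' S = (OSet s t 1) ×ˢ (OSet (s₀ - s) 0 t) := by
    ext ⟨γ, δ⟩
    simp only [Set.mem_preimage, Set.mem_prod, hSdef, Set.mem_setOf_eq, OSet]
    constructor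
    · rintro ⟨h1, h2, h3⟩
      refine ⟨⟨?_, ?_⟩, ?_, ?_⟩
      · intro k l hkl
        have := h1 (f (Sum.inl k)) (f (Sum.inl l))
          (by rw [Fin.le_def, hfl, hfl]; exact hkl)
        simpa [hval] using this
      · intro k
        refine ⟨?_, ?_⟩
        · have := (h3 (f (Sum.inl k))).1 (by rw [hfl]; exact k.isLt)
          simpa [hval] using this
        · have := (h2 (f (Sum.inl k))).2
          simpa [hval] using this
      · intro k l hkl
        have := h1 (f (Sum.inr k)) (f (Sum.inr l))
          (by rw [Fin.le_def, hfr, hfr]; exact Nat.add_le_add_left hkl s)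
        simpa [hval] using this
      · intro k
        refine ⟨?_, ?_⟩
        · have := (h2 (f (Sum.inr k))).1
          simpa [hval] using this
        · have := (h3 (f (Sum.inr k))).2 (by rw [hfr]; exact Nat.le_add_right s k.val)
          simpa [hval] using this
    · rintro ⟨⟨hγo, hγb⟩, hδo, hδb⟩
      refine ⟨?_, ?_, ?_⟩
      · intro i j hij
        obtain ⟨x, rfl⟩ := f.surjective i
        obtain ⟨y, rfl⟩ := f.surjective j
        rw [Fin.le_def] at hij
        rw [hval, hval]
        cases x with
        | inl k =>
          cases y with
          | inl l =>
            rw [hfl, hfl] at hij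
            exact hγo k l hij
          | inr l => exact le_trans (hδb l).2 (hγb k).1
        | inr k =>
          cases y with
          | inl l =>
            rw [hfr, hfl] at hij
            have := l.isLt
            omega
          | inr l =>
            rw [hfr, hfr] at hij
            exact hδo k l (by omega)
      · intro i
        obtain ⟨x, rfl⟩ := f.surjective i
        rw [hval]
        cases x with
        | inl k => exact ⟨le_trans ht.1 (hγb k).1, (hγb k).2⟩
        | inr k => exact ⟨(hδb k).1, le_trans (hδb k).2 ht.2⟩
      · intro i
        obtain ⟨x, rfl⟩ := f.surjective i
        cases x with
        | inl k =>
          refine ⟨fun _ => ?_, fun hle => ?_⟩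
          · rw [hval]; exact (hγb k).1
          · rw [hfl] at hle; exact absurd hle (by omega)
        | inr k =>
          refine ⟨fun hlt => ?_, fun _ => ?_⟩
          · rw [hfr] at hlt; omega
          · rw [hval]; exact (hδb k).2
  have hsum : ∀ (γ : Fin s → ℝ) (δ : Fin (s₀ - s) → ℝ),
      ∑ i, E (γ, δ) i = (∑ k, γ k) + ∑ k, δ k := by
    intro γ δ
    rw [← Equiv.sum_comp f (E (γ, δ))]
    simp_rw [hval]
    rw [Fintype.sum_sum_type]
    rfl
  rw [← hmp.setIntegral_preimage_emb E.measurableEmbedding, hSet]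
  have hcongr : ∀ p : (Fin s → ℝ) × (Fin (s₀ - s) → ℝ),
      Real.exp (2 * η * ∑ k, E p k)
        = Real.exp (2 * η * ∑ k, p.1 k) * Real.exp (2 * η * ∑ k, p.2 k) := by
    rintro ⟨γ, δ⟩
    rw [hsum, mul_add, Real.exp_add]
  simp_rw [hcongr]
  rw [MeasureTheory.Measure.volume_eq_prod,
    setIntegral_prod_mul (fun γ : Fin s → ℝ => Real.exp (2 * η * ∑ k, γ k))
      (fun δ : Fin (s₀ - s) → ℝ => Real.exp (2 * η * ∑ k, δ k))]
  rw [oset_integral (2 * η) hc s t 1 ht.2, oset_integral (2 * η) hc (s₀ - s) 0 t ht.1]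
  simp only [mul_one, mul_zero, Real.exp_zero]
  ring
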